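/- Let G be a finite simple undirected graph with Laplacian L = D - A, let D̃ = D + I, let Z be a real n×n matrix with zero diagonal and entries in [-1,1], and set E = D̃^{-1/2} (L ⊙ (Z + I)) D̃^{-1/2}. Then every eigenvalue λ ∈ ℂ of E satisfies Re(λ) ≥ 0. -/

import Mathlib

/-!
Writing `E = S M S` with `S = D̃^{-1/2}` and `M = L ⊙ (Z + I)`, the matrices `(S M) S` and
`S (S M) = D̃⁻¹ M` have the same characteristic polynomial, hence the same eigenvalues.
Row `u` of `M` has diagonal entry `deg u` and off-diagonal entries `-Z u v` at the `deg u`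
neighbours `v`, so `M` is weakly diagonally dominant, and so is every row rescaling of it by a
nonnegative diagonal matrix. Gershgorin's discs of such a matrix are centred at a point `c ≥ 0`
with radius at most `c`, hence lie in the closed right half-plane.
-/

open Finset

namespace Matrix

variable {ι : Type*} [Fintype ι] [DecidableEq ι]

theorem spectrum_map_mul_comm {K L : Type*} [Field K] [Field L] (f : K →+* L)
    (A B : Matrix ι ι K) : spectrum L ((A * B).map f) = spectrum L ((B * A).map f) := by
  ext μ
  simp only [mem_spectrum_iff_isRoot_charpoly, charpoly_map, charpoly_mul_comm]

def IsRowDiagDominant (A : Matrix ι ι ℝ) : Prop :=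
  ∀ i, ∑ j ∈ univ.erase i, |A i j| ≤ A i i

theorem IsRowDiagDominant.diagonal_mul {A : Matrix ι ι ℝ} (hA : A.IsRowDiagDominant)
    {d : ι → ℝ} (hd : ∀ i, 0 ≤ d i) : (diagonal d * A).IsRowDiagDominant := by
  intro i
  simp only [Matrix.diagonal_mul, abs_mul, abs_of_nonneg (hd i), ← mul_sum]
  exact mul_le_mul_of_nonneg_left (hA i) (hd i)

theorem IsRowDiagDominant.re_nonneg_of_mem_spectrum {A : Matrix ι ι ℝ}
    (hA : A.IsRowDiagDominant) {μ : ℂ} (hμ : μ ∈ spectrum ℂ (A.map Complex.ofReal)) :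
    0 ≤ μ.re := by
  rw [← spectrum_toLin', ← Module.End.hasEigenvalue_iff_mem_spectrum] at hμ
  obtain ⟨k, hk⟩ := eigenvalue_mem_ball hμ
  simp only [map_apply, Complex.norm_real, Real.norm_eq_abs, Metric.mem_closedBall,
    dist_eq_norm] at hk
  have hre : A k k - μ.re ≤ ‖μ - A k k‖ := by
    rw [norm_sub_rev]
    simpa using Complex.re_le_norm (A k k - μ)
  linarith [hA k]

end Matrix

open Matrix

theorem SimpleGraph.isRowDiagDominant_lapMatrix_hadamard {V : Type*} [Fintype V]
    [DecidableEq V] (G : SimpleGraph V) [DecidableRel G.Adj] (Z : Matrix V V ℝ)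
    (hZdiag : ∀ u, Z u u = 0) (hZbdd : ∀ u v, |Z u v| ≤ 1) :
    (hadamard (G.lapMatrix ℝ) (Z + 1)).IsRowDiagDominant := by
  intro u
  have hdiag : hadamard (G.lapMatrix ℝ) (Z + 1) u u = G.degree u := by
    simp [lapMatrix, degMatrix, hZdiag]
  have hoff : ∀ v ∈ univ.erase u,
      |hadamard (G.lapMatrix ℝ) (Z + 1) u v| ≤ if G.Adj u v then 1 else 0 := by
    intro v hv
    have huv : u ≠ v := (ne_of_mem_erase hv).symm
    by_cases hadj : G.Adj u v
    · simpa [lapMatrix, degMatrix, huv, hadj] using hZbdd u v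
    · simp [lapMatrix, degMatrix, huv, hadj]
  calc ∑ v ∈ univ.erase u, |hadamard (G.lapMatrix ℝ) (Z + 1) u v|
      ≤ ∑ v ∈ univ.erase u, if G.Adj u v then (1 : ℝ) else 0 := sum_le_sum hoff
    _ = ∑ v, if G.Adj u v then (1 : ℝ) else 0 := by
        rw [sum_erase _ (by simp)]
    _ = _ := by rw [hdiag, G.degree_eq_sum_if_adj]

theorem lying_diffusion_eigenvalue_re_nonneg
    (n : ℕ) (G : SimpleGraph (Fin n)) [DecidableRel G.Adj]
    (Z : Matrix (Fin n) (Fin n) ℝ)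
    (hZdiag : ∀ u, Z u u = 0) (hZbdd : ∀ u v, |Z u v| ≤ 1)
    (E : Matrix (Fin n) (Fin n) ℝ)
    (hE : E = Matrix.diagonal (fun u => (Real.sqrt ((G.degree u : ℝ) + 1))⁻¹) *
            Matrix.hadamard (G.lapMatrix ℝ) (Z + 1) *
            Matrix.diagonal (fun u => (Real.sqrt ((G.degree u : ℝ) + 1))⁻¹))
    (lam : ℂ) (hlam : lam ∈ spectrum ℂ (E.map Complex.ofReal)) :
    0 ≤ lam.re := by
  set S := diagonal fun u => (Real.sqrt ((G.degree u : ℝ) + 1))⁻¹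
  set M := hadamard (G.lapMatrix ℝ) (Z + 1)
  have hSS : S * S = diagonal fun u => ((G.degree u : ℝ) + 1)⁻¹ := by
    rw [diagonal_mul_diagonal]
    congr with u
    rw [← mul_inv, Real.mul_self_sqrt (by positivity)]
  have hspec : spectrum ℂ (E.map Complex.ofReal) =
      spectrum ℂ ((S * S * M).map Complex.ofRealHom) := by
    rw [hE, mul_assoc S S M]
    exact spectrum_map_mul_comm Complex.ofRealHom (S * M) S
  rw [hspec, hSS] at hlam
  have hdom := (G.isRowDiagDominant_lapMatrix_hadamard Z hZdiag hZbdd).diagonal_mul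
    (fun u => inv_nonneg.mpr (by positivity : (0 : ℝ) ≤ G.degree u + 1))
  exact hdom.re_nonneg_of_mem_spectrum hlam
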